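/- Let h₀ be an extremal marginal tracial state on B ⊗ B with range projection R. Then B ⊗ B = ℂI + (N ⊗ I + I ⊗ N) + (R(B⊗B)R)^⊥, where orthogonal complements are taken in the Hilbert–Schmidt inner product. -/

import Mathlib

open Matrix Kronecker
open scoped ComplexOrder

/-- The trace-preserving conditional expectation of `B ⊗ B` onto `B ⊗ I`:
`P(x ⊗ y) = τ(y) (x ⊗ I)`. -/
noncomputable def Pexp (n : ℕ) (m : Matrix (Fin n × Fin n) (Fin n × Fin n) ℂ) :
    Matrix (Fin n × Fin n) (Fin n × Fin n) ℂ :=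
  Matrix.of fun p q => if p.2 = q.2 then (∑ k, m (p.1, k) (q.1, k)) / n else 0

/-- The trace-preserving conditional expectation of `B ⊗ B` onto `I ⊗ B`:
`Q(x ⊗ y) = τ(x) (I ⊗ y)`. -/
noncomputable def Qexp (n : ℕ) (m : Matrix (Fin n × Fin n) (Fin n × Fin n) ℂ) :
    Matrix (Fin n × Fin n) (Fin n × Fin n) ℂ :=
  Matrix.of fun p q => if p.1 = q.1 then (∑ k, m (k, p.2) (k, q.2)) / n else 0

/-- A marginal tracial state, as a density matrix: positive with `P(h) = Q(h) = I`. -/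
def IsMTS (n : ℕ) (h : Matrix (Fin n × Fin n) (Fin n × Fin n) ℂ) : Prop :=
  h.PosSemidef ∧ Pexp n h = 1 ∧ Qexp n h = 1

/-- An extreme point of the convex set of marginal tracial states. -/
def IsExtremalMTS (n : ℕ) (h₀ : Matrix (Fin n × Fin n) (Fin n × Fin n) ℂ) : Prop :=
  IsMTS n h₀ ∧ ∀ (h₁ h₂ : Matrix (Fin n × Fin n) (Fin n × Fin n) ℂ) (t : ℝ),
    0 < t → t < 1 → IsMTS n h₁ → IsMTS n h₂ →
    h₀ = (t : ℂ) • h₁ + ((1 - t : ℝ) : ℂ) • h₂ → h₁ = h₀ ∧ h₂ = h₀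

/-! Extremality of `h₀` forces `R(B⊗B)R ∩ ker P ∩ ker Q = 0`: a Hermitian `k` in this
intersection has the form `h₀ d h₀` (as `range R = range h₀`), so `h₀ ± ε k` are marginal tracial
states for small `ε > 0`, with average `h₀`; complex `k` reduce to Hermitian ones. Every matrix
Hilbert–Schmidt orthogonal to `B ⊗ I + I ⊗ B` lies in `ker P ∩ ker Q`, so taking orthogonal
complements gives `B ⊗ B = (B ⊗ I + I ⊗ B) + (R(B⊗B)R)ᗮ`; finally
`B ⊗ I + I ⊗ B = ℂI + N ⊗ I + I ⊗ N` by splitting off traces. -/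

section CStarAlgebra

variable {A : Type*} [CStarAlgebra A] [PartialOrder A] [StarOrderedRing A]

lemma IsSelfAdjoint.one_sub_nonneg_of_norm_le_one {a : A} (ha : IsSelfAdjoint a) (h : ‖a‖ ≤ 1) :
    0 ≤ 1 - a := by
  rw [sub_nonneg]
  calc a ≤ algebraMap ℝ A ‖a‖ := ha.le_algebraMap_norm_self
    _ ≤ algebraMap ℝ A 1 := algebraMap_mono A h
    _ = 1 := map_one _

/- Writing `h = b⋆b`, one has `h ± ε • h d h = b⋆ (1 ± ε • b d b⋆) b`, and the middle factor is
positive once `ε ‖b d b⋆‖ ≤ 1`. -/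
lemma exists_pos_nonneg_add_and_sub_smul_mul_mul {h d : A} (hh : 0 ≤ h) (hd : IsSelfAdjoint d) :
    ∃ ε : ℝ, 0 < ε ∧ 0 ≤ h + ε • (h * d * h) ∧ 0 ≤ h - ε • (h * d * h) := by
  obtain ⟨b, rfl⟩ := CStarAlgebra.nonneg_iff_eq_star_mul_self.mp hh
  set m := b * d * star b
  have hm : IsSelfAdjoint m := hd.conjugate b
  set ε := (‖m‖ + 1)⁻¹
  have hεm : ‖ε • m‖ ≤ 1 := by
    rw [norm_smul, Real.norm_of_nonneg (by positivity), inv_mul_le_one₀ (by positivity)]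
    linarith
  have hεm_sa : IsSelfAdjoint (ε • m) := (IsSelfAdjoint.all ε).smul hm
  have hplus : 0 ≤ 1 + ε • m := by
    simpa using hεm_sa.neg.one_sub_nonneg_of_norm_le_one (by rwa [norm_neg])
  have hminus : 0 ≤ 1 - ε • m := hεm_sa.one_sub_nonneg_of_norm_le_one hεm
  have hconj (c : ℝ) :
      star b * b + c • (star b * b * d * (star b * b)) = star b * (1 + c • m) * b := by
    simp only [m, mul_add, add_mul, mul_one, mul_smul_comm, smul_mul_assoc, mul_assoc]
  refine ⟨ε, by positivity, ?_, ?_⟩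
  · rw [hconj]
    exact star_left_conjugate_nonneg hplus b
  · rw [sub_eq_add_neg, ← neg_smul, hconj, neg_smul, ← sub_eq_add_neg]
    exact star_left_conjugate_nonneg hminus b

end CStarAlgebra

lemma Submodule.eq_bot_of_forall_isSelfAdjoint {A : Type*} [AddCommGroup A] [Module ℂ A]
    [StarAddMonoid A] [StarModule ℂ A] (S : Submodule ℂ A) (hS : ∀ k ∈ S, star k ∈ S)
    (h : ∀ k ∈ S, IsSelfAdjoint k → k = 0) : S = ⊥ := by
  have hre : ∀ k ∈ S, k + star k = 0 := fun k hk =>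
    h _ (S.add_mem hk (hS k hk)) (by simp [IsSelfAdjoint, add_comm])
  refine (Submodule.eq_bot_iff S).mpr fun k hk => ?_
  have h1 := hre k hk
  have h2 := hre _ (S.smul_mem Complex.I hk)
  rw [star_smul, Complex.star_def, Complex.conj_I, neg_smul, ← sub_eq_add_neg, ← smul_sub,
    smul_eq_zero] at h2
  have h3 : k - star k = 0 := h2.resolve_left Complex.I_ne_zero
  have : (2 : ℂ) • k = 0 := by rw [two_smul]; linear_combination (norm := module) h1 + h3
  exact (smul_eq_zero.mp this).resolve_left two_ne_zero

namespace Matrix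

section RangeFactorization

variable {m n p K : Type*} [Fintype n] [DecidableEq n] [Fintype p] [DecidableEq p] [CommRing K]

lemma exists_mul_eq_of_range_le {A : Matrix m n K} {B : Matrix m p K}
    (h : LinearMap.range B.toLin' ≤ LinearMap.range A.toLin') : ∃ C : Matrix n p K, A * C = B := by
  obtain ⟨g, hg⟩ := Module.projective_lifting_property A.toLin'.rangeRestrict
    (B.toLin'.codRestrict _ fun v => h ⟨v, rfl⟩) A.toLin'.surjective_rangeRestrict
  refine ⟨LinearMap.toMatrix' g, toLin'.injective ?_⟩
  rw [toLin'_mul, toLin'_toMatrix']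
  exact LinearMap.ext fun v => congrArg Subtype.val (LinearMap.congr_fun hg v)

lemma exists_eq_mul_mul_of_range_le [StarRing K] {R h k : Matrix n n K} (hR : Rᴴ = R)
    (hh : h.IsHermitian) (hRh : LinearMap.range R.toLin' ≤ LinearMap.range h.toLin')
    (hk : R * k * R = k) : ∃ C : Matrix n n K, k = h * (C * k * Cᴴ) * h := by
  obtain ⟨C, hC⟩ := exists_mul_eq_of_range_le hRh
  have hC' : Cᴴ * h = R := by rw [← hR, ← hC, conjTranspose_mul, hh.eq]
  refine ⟨C, ?_⟩
  calc k = R * k * R := hk.symm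
    _ = h * C * k * (Cᴴ * h) := by rw [hC, hC']
    _ = h * (C * k * Cᴴ) * h := by simp only [mul_assoc]

end RangeFactorization

variable {ι : Type*} [Fintype ι] [DecidableEq ι]

lemma trace_sub_trace_div_card_smul_one {K : Type*} [Field K] [CharZero K] (x : Matrix ι ι K) :
    (x - (x.trace / Fintype.card ι) • (1 : Matrix ι ι K)).trace = 0 := by
  rcases isEmpty_or_nonempty ι with hι | hι
  · simp [trace]
  · rw [trace_sub, trace_smul, trace_one, smul_eq_mul,
      div_mul_cancel₀ _ (Nat.cast_ne_zero.mpr Fintype.card_ne_zero), sub_self]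

lemma trace_single_kronecker_one_mul (i j : ι) (c : ℂ) (k : Matrix (ι × ι) (ι × ι) ℂ) :
    ((single i j c ⊗ₖ (1 : Matrix ι ι ℂ)) * k).trace = c * ∑ l, k (j, l) (i, l) := by
  simp [Matrix.trace, Matrix.mul_apply, one_apply, single_apply, Fintype.sum_prod_type, ite_and,
    Finset.mul_sum]

lemma trace_one_kronecker_single_mul (i j : ι) (c : ℂ) (k : Matrix (ι × ι) (ι × ι) ℂ) :
    (((1 : Matrix ι ι ℂ) ⊗ₖ single i j c) * k).trace = c * ∑ l, k (l, j) (l, i) := by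
  simp [Matrix.trace, Matrix.mul_apply, one_apply, single_apply, Fintype.sum_prod_type, ite_and,
    Finset.mul_sum]

lemma exists_eq_add_of_orthogonal_inf_eq_bot {𝕜 : Type*} [RCLike 𝕜] (A M : Submodule 𝕜 (Matrix ι ι 𝕜))
    (h : ∀ k ∈ M, (∀ a ∈ A, (aᴴ * k).trace = 0) → k = 0) (z : Matrix ι ι 𝕜) :
    ∃ a ∈ A, ∃ w, (∀ m ∈ M, (mᴴ * w).trace = 0) ∧ z = a + w := by
  let _ : NormedAddCommGroup (Matrix ι ι 𝕜) := toMatrixNormedAddCommGroup 1 PosDef.one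
  let _ : InnerProductSpace 𝕜 (Matrix ι ι 𝕜) := toMatrixInnerProductSpace 1 PosDef.one.posSemidef
  have inner_eq (x y : Matrix ι ι 𝕜) : inner 𝕜 x y = (xᴴ * y).trace := by
    change (y * 1 * xᴴ).trace = _
    rw [mul_one, trace_mul_comm]
  have hAM : (A ⊔ Mᗮ)ᗮ = ⊥ := by
    rw [← Submodule.inf_orthogonal, Submodule.orthogonal_orthogonal, Submodule.eq_bot_iff]
    rintro k ⟨hkA, hkM⟩
    exact h k hkM fun a ha => inner_eq a k ▸ hkA a ha
  obtain ⟨a, ha, w, hw, rfl⟩ := Submodule.mem_sup.mp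
    ((Submodule.orthogonal_eq_bot_iff.mp hAM).symm ▸ Submodule.mem_top : z ∈ A ⊔ Mᗮ)
  exact ⟨a, ha, w, fun m hm => inner_eq m w ▸ hw m hm, rfl⟩

end Matrix

section Marginals

variable {n : ℕ}

@[simps]
noncomputable def pexpLinearMap (n : ℕ) :
    Matrix (Fin n × Fin n) (Fin n × Fin n) ℂ →ₗ[ℂ] Matrix (Fin n × Fin n) (Fin n × Fin n) ℂ where
  toFun := Pexp n
  map_add' a b := by
    ext p q
    simp only [Pexp, of_apply, Matrix.add_apply]
    split_ifs <;> simp [Finset.sum_add_distrib, add_div]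
  map_smul' c a := by
    ext p q
    simp only [Pexp, of_apply, Matrix.smul_apply, smul_eq_mul, RingHom.id_apply]
    split_ifs <;> simp [← Finset.mul_sum, mul_div_assoc]

@[simps]
noncomputable def qexpLinearMap (n : ℕ) :
    Matrix (Fin n × Fin n) (Fin n × Fin n) ℂ →ₗ[ℂ] Matrix (Fin n × Fin n) (Fin n × Fin n) ℂ where
  toFun := Qexp n
  map_add' a b := by
    ext p q
    simp only [Qexp, of_apply, Matrix.add_apply]
    split_ifs <;> simp [Finset.sum_add_distrib, add_div]
  map_smul' c a := by
    ext p q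
    simp only [Qexp, of_apply, Matrix.smul_apply, smul_eq_mul, RingHom.id_apply]
    split_ifs <;> simp [← Finset.mul_sum, mul_div_assoc]

lemma Pexp_conjTranspose (a : Matrix (Fin n × Fin n) (Fin n × Fin n) ℂ) :
    Pexp n aᴴ = (Pexp n a)ᴴ := by
  ext p q
  simp only [Pexp, of_apply, conjTranspose_apply, eq_comm (a := q.2)]
  split_ifs <;> simp [star_div₀, star_sum]

lemma Qexp_conjTranspose (a : Matrix (Fin n × Fin n) (Fin n × Fin n) ℂ) :
    Qexp n aᴴ = (Qexp n a)ᴴ := by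
  ext p q
  simp only [Qexp, of_apply, conjTranspose_apply, eq_comm (a := q.1)]
  split_ifs <;> simp [star_div₀, star_sum]

lemma Pexp_eq_zero_of_forall_trace_mul_eq_zero (k : Matrix (Fin n × Fin n) (Fin n × Fin n) ℂ)
    (h : ∀ x : Matrix (Fin n) (Fin n) ℂ, ((x ⊗ₖ (1 : Matrix (Fin n) (Fin n) ℂ))ᴴ * k).trace = 0) :
    Pexp n k = 0 := by
  ext p q
  have hpq := h (single p.1 q.1 1)
  rw [conjTranspose_kronecker, conjTranspose_single, conjTranspose_one, star_one,
    trace_single_kronecker_one_mul, one_mul] at hpq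
  simp [Pexp, hpq]

lemma Qexp_eq_zero_of_forall_trace_mul_eq_zero (k : Matrix (Fin n × Fin n) (Fin n × Fin n) ℂ)
    (h : ∀ y : Matrix (Fin n) (Fin n) ℂ, (((1 : Matrix (Fin n) (Fin n) ℂ) ⊗ₖ y)ᴴ * k).trace = 0) :
    Qexp n k = 0 := by
  ext p q
  have hpq := h (single p.2 q.2 1)
  rw [conjTranspose_kronecker, conjTranspose_single, conjTranspose_one, star_one,
    trace_one_kronecker_single_mul, one_mul] at hpq
  simp [Qexp, hpq]

lemma IsMTS.add {h k : Matrix (Fin n × Fin n) (Fin n × Fin n) ℂ} (hh : IsMTS n h)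
    (hpsd : (h + k).PosSemidef) (hP : Pexp n k = 0) (hQ : Qexp n k = 0) : IsMTS n (h + k) := by
  refine ⟨hpsd, ?_, ?_⟩
  · rw [← pexpLinearMap_apply, map_add, pexpLinearMap_apply, pexpLinearMap_apply, hh.2.1, hP,
      add_zero]
  · rw [← qexpLinearMap_apply, map_add, qexpLinearMap_apply, qexpLinearMap_apply, hh.2.2, hQ,
      add_zero]

namespace IsExtremalMTS

variable {h₀ R : Matrix (Fin n × Fin n) (Fin n × Fin n) ℂ}

lemma eq_zero_of_isMTS_add_sub (hext : IsExtremalMTS n h₀)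
    {k : Matrix (Fin n × Fin n) (Fin n × Fin n) ℂ} (hadd : IsMTS n (h₀ + k))
    (hsub : IsMTS n (h₀ - k)) : k = 0 := by
  have hmid : h₀ = ((1 / 2 : ℝ) : ℂ) • (h₀ + k) + ((1 - 1 / 2 : ℝ) : ℂ) • (h₀ - k) := by
    push_cast
    module
  simpa using (hext.2 _ _ (1 / 2) (by norm_num) (by norm_num) hadd hsub hmid).1

open scoped MatrixOrder Matrix.Norms.L2Operator in
/- Since `range R ⊆ range h₀`, such a `k` has the form `h₀ d h₀`, so `h₀ ± ε k ≥ 0` for small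
`ε > 0`; these have the same marginals as `h₀`. -/
lemma eq_zero_of_isHermitian (hext : IsExtremalMTS n h₀) (hR : Rᴴ = R)
    (hRh : LinearMap.range R.toLin' ≤ LinearMap.range h₀.toLin')
    {k : Matrix (Fin n × Fin n) (Fin n × Fin n) ℂ} (hk : k.IsHermitian) (hRk : R * k * R = k)
    (hP : Pexp n k = 0) (hQ : Qexp n k = 0) : k = 0 := by
  obtain ⟨C, hkC⟩ := exists_eq_mul_mul_of_range_le hR hext.1.1.isHermitian hRh hRk
  obtain ⟨ε, hε, hadd, hsub⟩ :=
    exists_pos_nonneg_add_and_sub_smul_mul_mul hext.1.1.nonneg (hk.isSelfAdjoint.conjugate C)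
  rw [star_eq_conjTranspose, ← hkC] at hadd hsub
  have hP' (c : ℝ) : Pexp n (c • k) = 0 := by
    rw [← pexpLinearMap_apply, LinearMap.map_smul_of_tower, pexpLinearMap_apply, hP, smul_zero]
  have hQ' (c : ℝ) : Qexp n (c • k) = 0 := by
    rw [← qexpLinearMap_apply, LinearMap.map_smul_of_tower, qexpLinearMap_apply, hQ, smul_zero]
  have hεk : ε • k = 0 := by
    refine hext.eq_zero_of_isMTS_add_sub (hext.1.add hadd.posSemidef (hP' ε) (hQ' ε)) ?_
    rw [sub_eq_add_neg, ← neg_smul] at hsub ⊢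
    exact hext.1.add hsub.posSemidef (hP' _) (hQ' _)
  exact (smul_eq_zero.mp hεk).resolve_left hε.ne'

lemma range_mulLeftRight_inf_ker_eq_bot (hext : IsExtremalMTS n h₀) (hR : Rᴴ = R)
    (hRR : R * R = R) (hRh : LinearMap.range R.toLin' ≤ LinearMap.range h₀.toLin') :
    LinearMap.range (LinearMap.mulLeftRight ℂ (R, R)) ⊓ LinearMap.ker (pexpLinearMap n) ⊓
      LinearMap.ker (qexpLinearMap n) = ⊥ := by
  refine Submodule.eq_bot_of_forall_isSelfAdjoint _ ?_ ?_
  · rintro _ ⟨⟨⟨a, rfl⟩, hP⟩, hQ⟩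
    refine ⟨⟨⟨star a, ?_⟩, ?_⟩, ?_⟩
    · simp [LinearMap.mulLeftRight_apply, star_eq_conjTranspose, conjTranspose_mul, hR, mul_assoc]
    · change Pexp n (star _) = 0
      rw [star_eq_conjTranspose, Pexp_conjTranspose, show Pexp n _ = 0 from hP, conjTranspose_zero]
    · change Qexp n (star _) = 0
      rw [star_eq_conjTranspose, Qexp_conjTranspose, show Qexp n _ = 0 from hQ, conjTranspose_zero]
  · rintro _ ⟨⟨⟨a, rfl⟩, hP⟩, hQ⟩ hk
    refine hext.eq_zero_of_isHermitian hR hRh hk ?_ hP hQ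
    simp only [LinearMap.mulLeftRight_apply]
    calc R * (R * a * R) * R = (R * R) * a * (R * R) := by simp only [mul_assoc]
      _ = R * a * R := by rw [hRR]

end IsExtremalMTS

end Marginals

theorem stmt15_general (n : ℕ)
    (h₀ R : Matrix (Fin n × Fin n) (Fin n × Fin n) ℂ)
    (hext : IsExtremalMTS n h₀)
    (hRherm : Rᴴ = R) (hRidem : R * R = R)
    (hRrange : LinearMap.range (Matrix.toLin' R) = LinearMap.range (Matrix.toLin' h₀)) :
    ∀ z : Matrix (Fin n × Fin n) (Fin n × Fin n) ℂ,
      ∃ (c : ℂ) (x y : Matrix (Fin n) (Fin n) ℂ)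
        (w : Matrix (Fin n × Fin n) (Fin n × Fin n) ℂ),
        x.trace = 0 ∧ y.trace = 0 ∧
        (∀ a : Matrix (Fin n × Fin n) (Fin n × Fin n) ℂ,
          ((R * a * R)ᴴ * w).trace / ((n : ℂ)^2) = 0) ∧
        z = c • (1 : Matrix (Fin n × Fin n) (Fin n × Fin n) ℂ) +
          (x ⊗ₖ (1 : Matrix (Fin n) (Fin n) ℂ) + (1 : Matrix (Fin n) (Fin n) ℂ) ⊗ₖ y) + w := by
  intro z
  let M := LinearMap.range (LinearMap.mulLeftRight ℂ (R, R))
  let A := LinearMap.range ((kroneckerBilinear (R := ℂ)).flip (1 : Matrix (Fin n) (Fin n) ℂ)) ⊔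
    LinearMap.range (kroneckerBilinear (R := ℂ) (1 : Matrix (Fin n) (Fin n) ℂ))
  have hMA : ∀ k ∈ M, (∀ a ∈ A, (aᴴ * k).trace = 0) → k = 0 := by
    intro k hkM hkA
    have hP := Pexp_eq_zero_of_forall_trace_mul_eq_zero k fun x =>
      hkA _ (Submodule.mem_sup_left ⟨x, rfl⟩)
    have hQ := Qexp_eq_zero_of_forall_trace_mul_eq_zero k fun y =>
      hkA _ (Submodule.mem_sup_right ⟨y, rfl⟩)
    have hbot := hext.range_mulLeftRight_inf_ker_eq_bot hRherm hRidem hRrange.le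
    exact (Submodule.eq_bot_iff _).mp hbot k ⟨⟨hkM, hP⟩, hQ⟩
  obtain ⟨_, ha, w, hw, rfl⟩ := exists_eq_add_of_orthogonal_inf_eq_bot A M hMA z
  obtain ⟨_, ⟨x, rfl⟩, _, ⟨y, rfl⟩, rfl⟩ := Submodule.mem_sup.mp ha
  set cx := x.trace / Fintype.card (Fin n)
  set cy := y.trace / Fintype.card (Fin n)
  refine ⟨cx + cy, x - cx • 1, y - cy • 1, w, trace_sub_trace_div_card_smul_one x,
    trace_sub_trace_div_card_smul_one y, fun a => ?_, ?_⟩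
  · rw [show ((R * a * R)ᴴ * w).trace = 0 from hw _ ⟨a, rfl⟩, zero_div]
  · change x ⊗ₖ 1 + 1 ⊗ₖ y + w = _
    simp only [sub_eq_add_neg, ← neg_smul, add_kronecker, kronecker_add, smul_kronecker,
      kronecker_smul, one_kronecker_one]
    module

/-- for an extremal marginal tracial state `h₀` with range projection `R`,
`B ⊗ B = ℂI + (N ⊗ I + I ⊗ N) + (R(B⊗B)R)ᵒ`, where `ᵒ` is the Hilbert–Schmidt
orthogonal complement. -/
theorem stmt15 (n : ℕ) (hn : 0 < n)
    (h₀ R : Matrix (Fin n × Fin n) (Fin n × Fin n) ℂ)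
    (hext : IsExtremalMTS n h₀)
    (hRherm : Rᴴ = R) (hRidem : R * R = R)
    (hRrange : LinearMap.range (Matrix.toLin' R) = LinearMap.range (Matrix.toLin' h₀)) :
    ∀ z : Matrix (Fin n × Fin n) (Fin n × Fin n) ℂ,
      ∃ (c : ℂ) (x y : Matrix (Fin n) (Fin n) ℂ)
        (w : Matrix (Fin n × Fin n) (Fin n × Fin n) ℂ),
        x.trace = 0 ∧ y.trace = 0 ∧
        (∀ a : Matrix (Fin n × Fin n) (Fin n × Fin n) ℂ,
          ((R * a * R)ᴴ * w).trace / ((n : ℂ)^2) = 0) ∧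
        z = c • (1 : Matrix (Fin n × Fin n) (Fin n × Fin n) ℂ) +
          (x ⊗ₖ (1 : Matrix (Fin n) (Fin n) ℂ) + (1 : Matrix (Fin n) (Fin n) ℂ) ⊗ₖ y) + w :=
  stmt15_general n h₀ R hext hRherm hRidem hRrange
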